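/- (Theorem 5.) Let d ≥ 1, p ∈ [1,∞], let w ∈ ℝ^d with w ≠ 0, b ∈ ℝ, ε > 0, δ ≥ 0, and consider balanced Gaussian mixture data with means μ₊, μ₋ and σ > 0, with μ = (μ₊ − μ₋)/2 ≠ 0 and μ₀ = μ/‖μ‖₂. Let u_p be any point of the compact convex set D_{ε,δ|p} = {v ∈ ℝ^d : ‖v‖_p ≤ ε and |v·μ₀| ≤ δ} at which v ↦ w·v attains its maximum over D_{ε,δ|p}. Define the overall (ε,δ)-ℓp-strong-adversarial rate p_{s-adv|p} = (1/2)·P_{N(μ₊,σ²I_d)}({x : w·x + b > 0 and there exists v ∈ D_{ε,δ|p} with w·(x+v) + b ≤ 0}) + (1/2)·P_{N(μ₋,σ²I_d)}({x : w·x + b ≤ 0 and there exists v ∈ D_{ε,δ|p} with w·(x+v) + b > 0}). Then p_{s-adv|p} = 1 − p_m − (1/2)[Φ((w·μ + b')/(‖w‖₂σ) − (w·u_p)/(‖w‖₂σ)) + Φ((w·μ − b')/(‖w‖₂σ) − (w·u_p)/(‖w‖₂σ))], where p_m = 1 − (1/2)[Φ((w·μ + b')/(‖w‖₂σ)) + Φ((w·μ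 − b')/(‖w‖₂σ))]. -/

import Mathlib

open MeasureTheory ProbabilityTheory
open scoped ENNReal NNReal

/-- Euclidean inner product on `ℝ^d`. -/
noncomputable def dotp {d : ℕ} (w x : Fin d → ℝ) : ℝ := ∑ i, w i * x i

/-- The `ℓ₂` norm on `ℝ^d`. -/
noncomputable def l2 {d : ℕ} (w : Fin d → ℝ) : ℝ := Real.sqrt (∑ i, (w i)^2)

/-- The product Gaussian measure `N(m, σ²I_d)` on `ℝ^d`. -/
noncomputable def gaussPi {d : ℕ} (m : Fin d → ℝ) (σ : ℝ) : Measure (Fin d → ℝ) :=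
  Measure.pi fun i => gaussianReal (m i) ((σ^2).toNNReal)

/-- The standard normal cumulative distribution function `Φ`. -/
noncomputable def Phi (x : ℝ) : ℝ := ((gaussianReal 0 1) (Set.Iic x)).toReal

/-- The `ℓp` norm on `ℝ^d` for `p ∈ [1,∞]` (as an extended real exponent). -/
noncomputable def lpnorm {d : ℕ} (p : ℝ≥0∞) (v : Fin d → ℝ) : ℝ :=
  if p = ∞ then ⨆ i, |v i| else (∑ i, |v i| ^ p.toReal) ^ (1 / p.toReal)

/-- The `ℓp` norm on `ℝ^d` for a real exponent `p ∈ [1,∞)`. -/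
noncomputable def lpR {d : ℕ} (p : ℝ) (v : Fin d → ℝ) : ℝ := (∑ i, |v i| ^ p) ^ (1/p)

/-!
Because the perturbation set `D_{ε,δ|p}` is symmetric, a positive point `x` can be pushed across
the decision boundary exactly when `0 < w·x + b ≤ w·u_p`, and a negative one exactly when
`-w·u_p < w·x + b ≤ 0`. Under `N(m, σ²I_d)` the score `w·x` is `N(w·m, ‖w‖₂²σ²)` (characteristic
functions of independent Gaussians multiply), so each rate is a difference of two values of `Φ`,
and `Φ(-x) = 1 - Φ(x)` brings the sum into the stated form.
-/

lemma Phi_neg (x : ℝ) : Phi (-x) = 1 - Phi x := by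
  have := nullSingletonClass_gaussianReal (μ := 0) one_ne_zero
  have hsymm : (gaussianReal 0 1) (Set.Iic (-x)) = (gaussianReal 0 1) (Set.Ioi x) := by
    conv_lhs => rw [← neg_zero, ← gaussianReal_map_neg]
    rw [Measure.map_apply measurable_neg measurableSet_Iic, measure_congr Ioi_ae_eq_Ici]
    congr 1; ext y; simp
  rw [Phi, Phi, hsymm, ← Set.compl_Iic, prob_compl_eq_one_sub measurableSet_Iic,
    ENNReal.toReal_sub_of_le prob_le_one ENNReal.one_ne_top, ENNReal.toReal_one]

lemma Phi_neg_sub_Phi_neg (x y : ℝ) : Phi (-x) - Phi (-y) = Phi y - Phi x := by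
  rw [Phi_neg, Phi_neg]; ring

lemma gaussianReal_Iic_toReal (m : ℝ) {v : ℝ≥0} (hv : v ≠ 0) (a : ℝ) :
    (gaussianReal m v (Set.Iic a)).toReal = Phi ((a - m) / √v) := by
  have hsqrt : 0 < √(v : ℝ) := Real.sqrt_pos.mpr (by positivity)
  have hstd : (gaussianReal m v).map (fun x => (x - m) / √v) = gaussianReal 0 1 := by
    have hsq : NNReal.mk (√v ^ 2) (sq_nonneg _) = v := NNReal.eq (Real.sq_sqrt v.coe_nonneg)
    have h := gaussianReal_map_div_const (μ := m - m) (v := v) √v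
    rw [← gaussianReal_map_sub_const m, Measure.map_map (by fun_prop) (by fun_prop), hsq,
      div_self hv, sub_self, zero_div] at h
    exact h
  have hpre : (fun x => (x - m) / √v) ⁻¹' Set.Iic ((a - m) / √v) = Set.Iic a := by
    ext x; simp [div_le_div_iff_of_pos_right hsqrt]
  rw [Phi, ← hstd, Measure.map_apply (by fun_prop) measurableSet_Iic, hpre]

lemma gaussianReal_Ioc_toReal (m : ℝ) {v : ℝ≥0} (hv : v ≠ 0) {a e : ℝ} (hae : a ≤ e) :
    (gaussianReal m v (Set.Ioc a e)).toReal = Phi ((e - m) / √v) - Phi ((a - m) / √v) := by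
  have hsub : Set.Iic a ⊆ Set.Iic e := Set.Iic_subset_Iic.mpr hae
  rw [← Set.Iic_sdiff_Iic, measure_sdiff hsub measurableSet_Iic.nullMeasurableSet
    (measure_ne_top _ _), ENNReal.toReal_sub_of_le (measure_mono hsub) (measure_ne_top _ _),
    gaussianReal_Iic_toReal m hv, gaussianReal_Iic_toReal m hv]

lemma map_pi_gaussianReal_sum {ι : Type*} [Fintype ι] (m : ι → ℝ) (v : ι → ℝ≥0) :
    (Measure.pi fun i => gaussianReal (m i) (v i)).map (fun x => ∑ i, x i)
      = gaussianReal (∑ i, m i) (∑ i, v i) := by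
  refine Measure.ext_of_charFun (funext fun t => ?_)
  rw [charFun_map_sum_pi_eq_prod]
  simp only [Finset.prod_apply, charFun_gaussianReal, ← Complex.exp_sum]
  congr 1
  push_cast
  simp only [Finset.sum_sub_distrib, Finset.mul_sum, Finset.sum_mul, Finset.sum_div]

lemma gaussPi_map_dotp {d : ℕ} (w m : Fin d → ℝ) (σ : ℝ) :
    (gaussPi m σ).map (dotp w) = gaussianReal (dotp w m) ((l2 w * σ) ^ 2).toNNReal := by
  have hcomp : dotp w = (fun y : Fin d → ℝ => ∑ i, y i) ∘ (fun x i => w i * x i) := rfl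
  rw [gaussPi, hcomp, ← Measure.map_map (by fun_prop) (by fun_prop),
    Measure.pi_map_pi (fun i => by fun_prop)]
  simp only [gaussianReal_map_const_mul]
  rw [map_pi_gaussianReal_sum]
  congr 1
  ext
  rw [l2, mul_pow, Real.sq_sqrt (Finset.sum_nonneg fun i _ => sq_nonneg _), Finset.sum_mul]
  simp [Real.coe_toNNReal _ (sq_nonneg σ), Finset.sum_nonneg, mul_nonneg, sq_nonneg]

lemma l2_pos {d : ℕ} {w : Fin d → ℝ} (hw : w ≠ 0) : 0 < l2 w := by
  obtain ⟨i, hi⟩ := Function.ne_iff.mp hw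
  exact Real.sqrt_pos.mpr <| Finset.sum_pos' (fun j _ => sq_nonneg (w j))
    ⟨i, Finset.mem_univ i, pow_pos (abs_pos.mpr hi) 2 |>.trans_eq (sq_abs _)⟩

lemma measurable_dotp {d : ℕ} (w : Fin d → ℝ) : Measurable (dotp w) := by
  unfold dotp; fun_prop

lemma gaussPi_dotp_preimage_Ioc {d : ℕ} {w : Fin d → ℝ} (hw : w ≠ 0) (m : Fin d → ℝ) {σ : ℝ}
    (hσ : 0 < σ) {a e : ℝ} (hae : a ≤ e) :
    (gaussPi m σ (dotp w ⁻¹' Set.Ioc a e)).toReal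
      = Phi ((e - dotp w m) / (l2 w * σ)) - Phi ((a - dotp w m) / (l2 w * σ)) := by
  have hs : 0 < l2 w * σ := mul_pos (l2_pos hw) hσ
  have hsqrt : √(((l2 w * σ) ^ 2).toNNReal : ℝ) = l2 w * σ := by
    rw [Real.coe_toNNReal _ (sq_nonneg _), Real.sqrt_sq hs.le]
  rw [← Measure.map_apply (measurable_dotp w) measurableSet_Ioc, gaussPi_map_dotp,
    gaussianReal_Ioc_toReal _ (by simpa using hs.ne') hae, hsqrt]

section Adversarial

variable {E : Type*} [AddGroup E] (f : E →+ ℝ) {D : Set E} {u : E}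

lemma nonneg_of_isMaxOn_of_neg_mem (hD : ∀ v ∈ D, -v ∈ D) (hmax : IsMaxOn f D u) (hu : u ∈ D) :
    0 ≤ f u := by
  have := isMaxOn_iff.mp hmax (-u) (hD u hu)
  rw [map_neg] at this
  linarith

lemma setOf_nonpos_and_exists_add_pos_eq (hmax : IsMaxOn f D u) (hu : u ∈ D) (b : ℝ) :
    {x | f x + b ≤ 0 ∧ ∃ v ∈ D, 0 < f (x + v) + b} = f ⁻¹' Set.Ioc (-f u - b) (-b) := by
  ext x
  simp only [Set.mem_ofPred_eq, Set.mem_preimage, Set.mem_Ioc, map_add]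
  constructor
  · rintro ⟨hx, v, hv, hxv⟩
    exact ⟨by linarith [isMaxOn_iff.mp hmax v hv], by linarith⟩
  · rintro ⟨hlo, hhi⟩
    exact ⟨by linarith, u, hu, by linarith⟩

lemma setOf_pos_and_exists_add_nonpos_eq (hD : ∀ v ∈ D, -v ∈ D) (hmax : IsMaxOn f D u)
    (hu : u ∈ D) (b : ℝ) :
    {x | 0 < f x + b ∧ ∃ v ∈ D, f (x + v) + b ≤ 0} = f ⁻¹' Set.Ioc (-b) (f u - b) := by
  ext x
  simp only [Set.mem_ofPred_eq, Set.mem_preimage, Set.mem_Ioc, map_add]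
  constructor
  · rintro ⟨hx, v, hv, hxv⟩
    have := isMaxOn_iff.mp hmax (-v) (hD v hv)
    rw [map_neg] at this
    exact ⟨by linarith, by linarith⟩
  · rintro ⟨hlo, hhi⟩
    refine ⟨by linarith, -u, hD u hu, ?_⟩
    rw [map_neg]
    linarith

end Adversarial

def perturbationSet {d : ℕ} (p : ℝ≥0∞) (ε δ : ℝ) (μ₀ : Fin d → ℝ) : Set (Fin d → ℝ) :=
  {v | lpnorm p v ≤ ε ∧ |dotp v μ₀| ≤ δ}

lemma lpnorm_neg {d : ℕ} (p : ℝ≥0∞) (v : Fin d → ℝ) : lpnorm p (-v) = lpnorm p v := by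
  simp [lpnorm]

lemma neg_mem_perturbationSet {d : ℕ} {p : ℝ≥0∞} {ε δ : ℝ} {μ₀ v : Fin d → ℝ}
    (hv : v ∈ perturbationSet p ε δ μ₀) : -v ∈ perturbationSet p ε δ μ₀ := by
  have hdot : dotp (-v) μ₀ = -dotp v μ₀ := neg_dotProduct v μ₀
  exact ⟨(lpnorm_neg p v).trans_le hv.1, by rw [hdot, abs_neg]; exact hv.2⟩

theorem lp_strong_adversarial_rate_general {d : ℕ}
    (p : ℝ≥0∞)
    (w : Fin d → ℝ) (hw : w ≠ 0) (b ε δ : ℝ)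
    (μp μm : Fin d → ℝ) (σ : ℝ) (hσ : 0 < σ)
    (μ μbar μ₀ : Fin d → ℝ) (b' : ℝ)
    (hμ : μ = (1/2 : ℝ) • (μp - μm))
    (hμbar : μbar = (1/2 : ℝ) • (μp + μm)) (hb' : b' = dotp w μbar + b)
    (up : Fin d → ℝ)
    (hup_mem : lpnorm p up ≤ ε ∧ |dotp up μ₀| ≤ δ)
    (hup_max : ∀ v : Fin d → ℝ, lpnorm p v ≤ ε → |dotp v μ₀| ≤ δ →
        dotp w v ≤ dotp w up)
    (psadv pm : ℝ)
    (hpsadv : psadv =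
        (1/2) * ((gaussPi μp σ) {x : Fin d → ℝ | 0 < dotp w x + b ∧
            ∃ v : Fin d → ℝ, lpnorm p v ≤ ε ∧ |dotp v μ₀| ≤ δ ∧
              dotp w (x + v) + b ≤ 0}).toReal
      + (1/2) * ((gaussPi μm σ) {x : Fin d → ℝ | dotp w x + b ≤ 0 ∧
            ∃ v : Fin d → ℝ, lpnorm p v ≤ ε ∧ |dotp v μ₀| ≤ δ ∧
              0 < dotp w (x + v) + b}).toReal)
    (hpm : pm = 1 - (1/2) * (Phi ((dotp w μ + b') / (l2 w * σ)) +
                              Phi ((dotp w μ - b') / (l2 w * σ)))) :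
    psadv = 1 - pm - (1/2) *
        (Phi ((dotp w μ + b') / (l2 w * σ) - dotp w up / (l2 w * σ)) +
         Phi ((dotp w μ - b') / (l2 w * σ) - dotp w up / (l2 w * σ))) := by
  set f : (Fin d → ℝ) →+ ℝ := AddMonoidHom.mk' (dotp w) (dotProduct_add w)
  have hD : ∀ v ∈ perturbationSet p ε δ μ₀, -v ∈ perturbationSet p ε δ μ₀ :=
    fun _ => neg_mem_perturbationSet
  have hmax : IsMaxOn f (perturbationSet p ε δ μ₀) up := fun v hv => hup_max v hv.1 hv.2
  have hc : 0 ≤ dotp w up := nonneg_of_isMaxOn_of_neg_mem f hD hmax hup_mem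
  have hSp := setOf_pos_and_exists_add_nonpos_eq f hD hmax hup_mem b
  have hSm := setOf_nonpos_and_exists_add_pos_eq f hmax hup_mem b
  have hf : ⇑f = dotp w := rfl
  simp only [hf, perturbationSet, Set.mem_ofPred_eq, and_assoc] at hSp hSm
  have hμp : dotp w μp = dotp w μbar + dotp w μ := by
    rw [show μp = μbar + μ by rw [hμ, hμbar]; module]; exact dotProduct_add w μbar μ
  have hμm : dotp w μm = dotp w μbar - dotp w μ := by
    rw [show μm = μbar - μ by rw [hμ, hμbar]; module]; exact dotProduct_sub w μbar μ
  rw [hpsadv, hSp, hSm, gaussPi_dotp_preimage_Ioc hw μp hσ (by linarith),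
    gaussPi_dotp_preimage_Ioc hw μm hσ (by linarith), hpm, hμp, hμm, hb']
  set c := dotp w up
  set s := l2 w * σ
  set A := dotp w μ
  set M := dotp w μbar
  have hpos : Phi ((c - b - (M + A)) / s) - Phi ((-b - (M + A)) / s)
      = Phi ((A + (M + b)) / s) - Phi ((A + (M + b)) / s - c / s) := by
    rw [← Phi_neg_sub_Phi_neg]; congr 2 <;> ring
  have hneg : Phi ((-b - (M - A)) / s) - Phi ((-c - b - (M - A)) / s)
      = Phi ((A - (M + b)) / s) - Phi ((A - (M + b)) / s - c / s) := by
    congr 2 <;> ring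
  rw [hpos, hneg]
  ring

/-- Theorem 5: the overall `(ε,δ)`-`ℓp`-strong-adversarial rate
of a linear classifier for balanced Gaussian mixture data, expressed via any
maximizer `u_p` of `v ↦ w·v` over `D_{ε,δ|p}`. -/
theorem lp_strong_adversarial_rate {d : ℕ} (hd : 1 ≤ d)
    (p : ℝ≥0∞) (hp : 1 ≤ p)
    (w : Fin d → ℝ) (hw : w ≠ 0) (b ε δ : ℝ) (hε : 0 < ε) (hδ : 0 ≤ δ)
    (μp μm : Fin d → ℝ) (σ : ℝ) (hσ : 0 < σ)
    (μ μbar μ₀ : Fin d → ℝ) (b' : ℝ)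
    (hμ : μ = (1/2 : ℝ) • (μp - μm)) (hμne : μ ≠ 0) (hμ₀ : μ₀ = (l2 μ)⁻¹ • μ)
    (hμbar : μbar = (1/2 : ℝ) • (μp + μm)) (hb' : b' = dotp w μbar + b)
    (up : Fin d → ℝ)
    (hup_mem : lpnorm p up ≤ ε ∧ |dotp up μ₀| ≤ δ)
    (hup_max : ∀ v : Fin d → ℝ, lpnorm p v ≤ ε → |dotp v μ₀| ≤ δ →
        dotp w v ≤ dotp w up)
    (psadv pm : ℝ)
    (hpsadv : psadv =
        (1/2) * ((gaussPi μp σ) {x : Fin d → ℝ | 0 < dotp w x + b ∧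
            ∃ v : Fin d → ℝ, lpnorm p v ≤ ε ∧ |dotp v μ₀| ≤ δ ∧
              dotp w (x + v) + b ≤ 0}).toReal
      + (1/2) * ((gaussPi μm σ) {x : Fin d → ℝ | dotp w x + b ≤ 0 ∧
            ∃ v : Fin d → ℝ, lpnorm p v ≤ ε ∧ |dotp v μ₀| ≤ δ ∧
              0 < dotp w (x + v) + b}).toReal)
    (hpm : pm = 1 - (1/2) * (Phi ((dotp w μ + b') / (l2 w * σ)) +
                              Phi ((dotp w μ - b') / (l2 w * σ)))) :
    psadv = 1 - pm - (1/2) *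
        (Phi ((dotp w μ + b') / (l2 w * σ) - dotp w up / (l2 w * σ)) +
         Phi ((dotp w μ - b') / (l2 w * σ) - dotp w up / (l2 w * σ))) :=
  lp_strong_adversarial_rate_general p w hw b ε δ μp μm σ hσ μ μbar μ₀ b' hμ hμbar hb' up hup_mem
    hup_max psadv pm hpsadv hpm
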